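/- arXiv:2406.10925 — 4 statements merged into one kernel-verified Lean document; each statement's English description precedes it below -/
import Mathlib

section
/- If M ∈ GL(2n, ℝ) can be written as a product M = A·S of an invertible antisymmetric matrix A and a symmetric matrix S, then M is conjugate to -M (i.e., there exists Λ ∈ GL(2n, ℝ) with Λ⁻¹MΛ = -M). -/
/-!
Since `A` is invertible, `A⁻¹ M A = S A = -Mᵀ`, so it suffices that every square matrix over a
field is conjugate to its transpose. Make `Kⁿ` a `K[X]`-module through `M`. By the structure
theorem it is a direct sum of cyclic modules `K[X] ⧸ (q)`, and on such a module with `q` monic of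
degree `d` the form `(a, b) ↦ coeff (a * b %ₘ q) (d - 1)` is nondegenerate with `X` self-adjoint.
The Gram matrix `P` of the resulting form on `Kⁿ` is invertible and satisfies `Mᵀ P = P M`.
-/

open Matrix Polynomial DirectSum

variable (K : Type*) [Field K]

def HasSelfAdjointForm (N : Type*) [AddCommGroup N] [Module K N] [Module K[X] N] : Prop :=
  ∃ B : LinearMap.BilinForm K N, B.SeparatingLeft ∧
    ∀ x y, B ((X : K[X]) • x) y = B x ((X : K[X]) • y)

variable {K}

theorem HasSelfAdjointForm.of_linearEquiv {N N' : Type*}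
    [AddCommGroup N] [Module K N] [Module K[X] N] [IsScalarTower K K[X] N]
    [AddCommGroup N'] [Module K N'] [Module K[X] N'] [IsScalarTower K K[X] N']
    (e : N ≃ₗ[K[X]] N') (h : HasSelfAdjointForm K N') : HasSelfAdjointForm K N := by
  obtain ⟨B, hsep, hX⟩ := h
  let f : N →ₗ[K] N' := (e.restrictScalars K).toLinearMap
  refine ⟨B.compl₁₂ f f, fun x hx => ?_, fun x y => ?_⟩
  · exact e.map_eq_zero_iff.mp (hsep _ fun y => by simpa [f] using hx (e.symm y))
  · simpa [f] using hX (e x) (e y)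

noncomputable def Polynomial.topCoeffModByMonic {q : K[X]} (hq : q.Monic) :
    (K[X] ⧸ (K[X] ∙ q)) →ₗ[K] K :=
  lcoeff K (q.natDegree - 1) ∘ₗ
    ((K[X] ∙ q).restrictScalars K).liftQ (modByMonicHom q) (fun a ha => by
      obtain ⟨c, rfl⟩ := Submodule.mem_span_singleton.mp ha
      exact (modByMonic_eq_zero_iff_dvd hq).mpr (dvd_mul_left q c)) ∘ₗ
    (Submodule.Quotient.restrictScalarsEquiv K (K[X] ∙ q)).symm.toLinearMap

theorem Polynomial.topCoeffModByMonic_mk {q : K[X]} (hq : q.Monic) (a : K[X]) :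
    topCoeffModByMonic hq (Ideal.Quotient.mk _ a) = (a %ₘ q).coeff (q.natDegree - 1) :=
  rfl

theorem Polynomial.topCoeffModByMonic_mk_mul_X_pow {q r : K[X]} (hq : q.Monic) (hr : r ≠ 0)
    (hrq : r.degree < q.degree) :
    topCoeffModByMonic hq (Ideal.Quotient.mk _ (r * X ^ (q.natDegree - 1 - r.natDegree))) =
      r.leadingCoeff := by
  have hlt : r.natDegree < q.natDegree := natDegree_lt_natDegree hr hrq
  set k := q.natDegree - 1 - r.natDegree
  have hdeg : (r * X ^ k).natDegree = q.natDegree - 1 := by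
    rw [natDegree_mul_X_pow k hr]; omega
  have hmod : r * X ^ k %ₘ q = r * X ^ k := by
    rw [modByMonic_eq_self_iff hq, degree_eq_natDegree (mul_ne_zero hr (pow_ne_zero k X_ne_zero)),
      degree_eq_natDegree hq.ne_zero, hdeg]
    exact_mod_cast (by omega : q.natDegree - 1 < q.natDegree)
  rw [topCoeffModByMonic_mk, hmod, ← hdeg, coeff_natDegree, leadingCoeff_mul_X_pow]

theorem hasSelfAdjointForm_quotient_span_monic {q : K[X]} (hq : q.Monic) :
    HasSelfAdjointForm K (K[X] ⧸ (K[X] ∙ q)) := by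
  refine ⟨(LinearMap.mul K _).compr₂ (topCoeffModByMonic hq), fun x hx => ?_, fun x y => ?_⟩
  · obtain ⟨a, rfl⟩ := Ideal.Quotient.mk_surjective x
    have hmk : Ideal.Quotient.mk (K[X] ∙ q) a = Ideal.Quotient.mk _ (a %ₘ q) := by
      rw [Ideal.Quotient.eq, Ideal.mem_span_singleton']
      exact ⟨a /ₘ q, by linear_combination modByMonic_add_div a q⟩
    rw [hmk] at hx ⊢
    suffices a %ₘ q = 0 by rw [this, map_zero]
    by_contra hr
    have hzero := hx (Ideal.Quotient.mk _ (X ^ (q.natDegree - 1 - (a %ₘ q).natDegree)))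
    rw [LinearMap.compr₂_apply, LinearMap.mul_apply', ← map_mul,
      topCoeffModByMonic_mk_mul_X_pow hq hr (degree_modByMonic_lt a hq)] at hzero
    exact hr (leadingCoeff_eq_zero.mp hzero)
  · simp [smul_mul_assoc, mul_smul_comm]

theorem hasSelfAdjointForm_quotient_span {g : K[X]} (hg : g ≠ 0) :
    HasSelfAdjointForm K (K[X] ⧸ (K[X] ∙ g)) := by
  classical
  have hspan : (K[X] ∙ g) = (K[X] ∙ normalize g) :=
    Ideal.span_singleton_eq_span_singleton.mpr (associated_normalize g)
  exact .of_linearEquiv (Submodule.quotEquivOfEq _ _ hspan)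
    (hasSelfAdjointForm_quotient_span_monic (monic_normalize hg))

theorem HasSelfAdjointForm.directSum {ι : Type*} [Fintype ι] [DecidableEq ι] {N : ι → Type*}
    [∀ i, AddCommGroup (N i)] [∀ i, Module K (N i)] [∀ i, Module K[X] (N i)]
    (h : ∀ i, HasSelfAdjointForm K (N i)) : HasSelfAdjointForm K (⨁ i, N i) := by
  choose B hsep hX using h
  let Bsum : LinearMap.BilinForm K (⨁ i, N i) :=
    ∑ i, (B i).compl₁₂ (DirectSum.component K ι N i) (DirectSum.component K ι N i)
  have hBsum : ∀ x y, Bsum x y = ∑ i, B i (x i) (y i) := fun x y => by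
    simp only [Bsum, LinearMap.sum_apply, LinearMap.compl₁₂_apply]
    rfl
  refine ⟨Bsum, fun x hx => ?_, fun x y => ?_⟩
  · ext i
    refine hsep i (x i) fun y => ?_
    have := hx (DirectSum.of N i y)
    rwa [hBsum, Finset.sum_eq_single_of_mem i (Finset.mem_univ i) fun j _ hj => by
      rw [DirectSum.of_eq_of_ne _ _ _ hj, map_zero], DirectSum.of_eq_same] at this
  · simp only [hBsum, DirectSum.smul_apply, hX]

theorem HasSelfAdjointForm.of_isTorsion {N : Type*} [AddCommGroup N] [Module K N]
    [Module K[X] N] [IsScalarTower K K[X] N] [Module.Finite K[X] N]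
    (hN : Module.IsTorsion K[X] N) : HasSelfAdjointForm K N := by
  classical
  obtain ⟨ι, _, p, hp, e, ⟨l⟩⟩ := Module.equiv_directSum_of_isTorsion hN
  exact .of_linearEquiv l
    (.directSum fun i => hasSelfAdjointForm_quotient_span (pow_ne_zero (e i) (hp i).ne_zero))

theorem Module.End.exists_separatingLeft_isAdjointPair {V : Type*} [AddCommGroup V] [Module K V]
    [FiniteDimensional K V] (f : Module.End K V) :
    ∃ B : LinearMap.BilinForm K V, B.SeparatingLeft ∧ LinearMap.IsAdjointPair B B f f := by
  obtain ⟨B, hsep, hX⟩ := HasSelfAdjointForm.of_isTorsion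
    (Module.AEval.isTorsion_of_finiteDimensional K V f)
  let e := Module.AEval'.of f
  refine ⟨B.compl₁₂ e e, fun x hx => ?_, fun x y => ?_⟩
  · exact e.map_eq_zero_iff.mp (hsep _ fun y => by simpa using hx (e.symm y))
  · have := hX (e x) (e y)
    rwa [Module.AEval'.X_smul_of, Module.AEval'.X_smul_of] at this

theorem Matrix.exists_isUnit_det_transpose_mul_eq {ι : Type*} [Fintype ι] [DecidableEq ι]
    (M : Matrix ι ι K) : ∃ P : Matrix ι ι K, IsUnit P.det ∧ Mᵀ * P = P * M := by
  obtain ⟨B, hsep, hadj⟩ := Module.End.exists_separatingLeft_isAdjointPair (toLin' M)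
  refine ⟨LinearMap.toMatrix₂' K B, ?_, ?_⟩
  · exact isUnit_iff_ne_zero.mpr
      (separatingLeft_iff_det_ne_zero.mp (LinearMap.separatingLeft_toMatrix₂'_iff.mpr hsep))
  · rw [← Matrix.toLinearMap₂'_toMatrix' (R := K) B] at hadj
    exact (isAdjointPair_toLinearMap₂' _ _ _ _).mp hadj

theorem Matrix.exists_conj_eq_neg_of_eq_antisymm_mul_symm {ι : Type*} [Fintype ι] [DecidableEq ι]
    {M A S : Matrix ι ι K} (hA : Aᵀ = -A) (hAinv : IsUnit A.det) (hS : Sᵀ = S)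
    (hMAS : M = A * S) : ∃ Λ : Matrix ι ι K, IsUnit Λ.det ∧ Λ⁻¹ * M * Λ = -M := by
  obtain ⟨P, hPdet, hP⟩ := M.exists_isUnit_det_transpose_mul_eq
  have hMT : Mᵀ = -(S * A) := by rw [hMAS, transpose_mul, hS, hA, Matrix.mul_neg]
  refine ⟨A * P, by rw [det_mul]; exact hAinv.mul hPdet, ?_⟩
  calc (A * P)⁻¹ * M * (A * P) = P⁻¹ * (S * A) * P := by
        rw [mul_inv_rev, hMAS]
        simp only [Matrix.mul_assoc, nonsing_inv_mul_cancel_left _ _ hAinv]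
    _ = -(P⁻¹ * (Mᵀ * P)) := by rw [hMT]; noncomm_ring
    _ = -M := by rw [hP, nonsing_inv_mul_cancel_left _ _ hPdet]

theorem stmt1_general (n : ℕ) (M A S : Matrix (Fin (2*n)) (Fin (2*n)) ℝ)
    (hA : Aᵀ = -A) (hAinv : IsUnit A.det)
    (hS : Sᵀ = S) (hMAS : M = A * S) :
    ∃ Λ : Matrix (Fin (2*n)) (Fin (2*n)) ℝ, IsUnit Λ.det ∧ Λ⁻¹ * M * Λ = -M :=
  Matrix.exists_conj_eq_neg_of_eq_antisymm_mul_symm hA hAinv hS hMAS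

theorem stmt1 (n : ℕ) (M A S : Matrix (Fin (2*n)) (Fin (2*n)) ℝ)
    (hM : IsUnit M.det) (hA : Aᵀ = -A) (hAinv : IsUnit A.det)
    (hS : Sᵀ = S) (hMAS : M = A * S) :
    ∃ Λ : Matrix (Fin (2*n)) (Fin (2*n)) ℝ, IsUnit Λ.det ∧ Λ⁻¹ * M * Λ = -M :=
  stmt1_general n M A S hA hAinv hS hMAS
end

section
/- Let B₁, B₂ be n×n real matrices and suppose B₁ = A₁S₁ with A₁ antisymmetric, S₁ symmetric and invertible, and S₁B₂ symmetric. Then the block matrix M = [[B₁, B₂], [I, 0]] factors as M = Ω·Σ where Ω = [[A₁, -S₁⁻¹], [S₁⁻¹, 0]] is antisymmetric and Σ = [[S₁, 0], [0, -S₁B₂]] is symmetric. In particular, M is the product of an antisymmetric matrix and a symmetric matrix. -/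
/-!
With `Ω = [[A, -S⁻¹], [S⁻¹, 0]]` and `Σ = diag(S, -S B)`, the product `Ω Σ` is
`[[A S, S⁻¹ S B], [S⁻¹ S, 0]] = [[A S, B], [1, 0]]`, using only `S⁻¹ S = 1`.
Skew-symmetry of `Ω` reduces to that of `A` and symmetry of `S⁻¹`; symmetry of `Σ` to that of
`S` and `S B`.
-/

open Matrix

namespace Matrix

variable {m α : Type*}

theorem fromBlocks_mul_one_zero_eq_mul [Fintype m] [DecidableEq m] [CommRing α]
    (A S B : Matrix m m α) (hS : IsUnit S.det) :
    fromBlocks (A * S) B 1 0 = fromBlocks A (-S⁻¹) S⁻¹ 0 * fromBlocks S 0 0 (-(S * B)) := by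
  simp [fromBlocks_multiply, ← Matrix.mul_assoc, nonsing_inv_mul _ hS]

theorem transpose_fromBlocks_neg_zero [AddGroup α] {A C : Matrix m m α}
    (hA : Aᵀ = -A) (hC : C.IsSymm) :
    (fromBlocks A (-C) C 0)ᵀ = -fromBlocks A (-C) C 0 := by
  rw [fromBlocks_transpose, fromBlocks_neg, hA, transpose_neg, hC.eq, transpose_zero, neg_neg,
    neg_zero]

end Matrix

theorem stmt7 (n : ℕ) (A₁ S₁ B₂ : Matrix (Fin n) (Fin n) ℝ)
    (hA : A₁ᵀ = -A₁) (hS : S₁ᵀ = S₁) (hSinv : IsUnit S₁.det)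
    (hSB : (S₁ * B₂)ᵀ = S₁ * B₂) :
    Matrix.fromBlocks (A₁ * S₁) B₂ 1 0 =
      Matrix.fromBlocks A₁ (-S₁⁻¹) S₁⁻¹ 0 * Matrix.fromBlocks S₁ 0 0 (-(S₁ * B₂)) ∧
    (Matrix.fromBlocks A₁ (-S₁⁻¹) S₁⁻¹ (0 : Matrix (Fin n) (Fin n) ℝ))ᵀ =
      -Matrix.fromBlocks A₁ (-S₁⁻¹) S₁⁻¹ 0 ∧
    (Matrix.fromBlocks S₁ 0 (0 : Matrix (Fin n) (Fin n) ℝ) (-(S₁ * B₂)))ᵀ =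
      Matrix.fromBlocks S₁ 0 0 (-(S₁ * B₂)) :=
  ⟨fromBlocks_mul_one_zero_eq_mul A₁ S₁ B₂ hSinv,
    transpose_fromBlocks_neg_zero hA (IsSymm.inv hS),
    IsSymm.fromBlocks hS transpose_zero (IsSymm.neg hSB)⟩
end

section
/- Let M = [[M₁₁, M₁₂], [M₂₁, M₂₂]] be a 2n×2n real matrix with M₂₁ invertible, and let B₁(M) = M₂₁M₁₁M₂₁⁻¹ + M₂₂ and B₂(M) = M₂₁M₁₂ − M₂₁M₁₁M₂₁⁻¹M₂₂. Then for any g = [[T, X], [0, I]] with T invertible, the conjugate M' = g·M·g⁻¹ has invertible lower-left block, and B₁(M') = B₁(M) and B₂(M') = B₂(M). -/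
/-!
Write `R = [0 1]` for the row extracting `x` from `ξ = (p, x)`. Along `ξ̇ = M ξ` one has
`ẋ = R M ξ` and `ẍ = R M² ξ`, so `[B₁ B₂]` is the row with `R M² = [B₁ B₂] V`, where
`V = [R M; R] = [[M₂₁, M₂₂], [0, 1]]` maps `ξ` to `(ẋ, x)` and has `det V = det M₂₁`.
Every `g ∈ P` fixes `R` (`R g = R`), so conjugating `M` by `g` replaces `R M²` by `R M² g⁻¹` and
`V` by `V g⁻¹`: the row `[B₁ B₂] = R M² V⁻¹` is unchanged, and `det V` is only multiplied by
the unit `det g⁻¹`.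
-/

open Matrix

noncomputable def B₁ {n : ℕ} (M : Matrix (Fin n ⊕ Fin n) (Fin n ⊕ Fin n) ℝ) :
    Matrix (Fin n) (Fin n) ℝ :=
  M.toBlocks₂₁ * M.toBlocks₁₁ * (M.toBlocks₂₁)⁻¹ + M.toBlocks₂₂

noncomputable def B₂ {n : ℕ} (M : Matrix (Fin n ⊕ Fin n) (Fin n ⊕ Fin n) ℝ) :
    Matrix (Fin n) (Fin n) ℝ :=
  M.toBlocks₂₁ * M.toBlocks₁₂ - M.toBlocks₂₁ * M.toBlocks₁₁ * (M.toBlocks₂₁)⁻¹ * M.toBlocks₂₂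

section Conjugation

variable {m α : Type*} [Fintype m] [DecidableEq m] [CommRing α]

-- Explicit `m α`: left implicit, `positionRow * M` is elaborated with the `CStarMatrix` product.
variable (m α) in
def positionRow : Matrix m (m ⊕ m) α := fromCols 0 1

def velocityPositionMatrix (M : Matrix (m ⊕ m) (m ⊕ m) α) : Matrix (m ⊕ m) (m ⊕ m) α :=
  fromRows (positionRow m α * M) (positionRow m α)

theorem positionRow_mul (M : Matrix (m ⊕ m) (m ⊕ m) α) :
    positionRow m α * M = fromCols M.toBlocks₂₁ M.toBlocks₂₂ := by
  conv_lhs => rw [← fromBlocks_toBlocks M]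
  rw [positionRow, fromCols_mul_fromBlocks]
  simp

theorem velocityPositionMatrix_eq_fromBlocks (M : Matrix (m ⊕ m) (m ⊕ m) α) :
    velocityPositionMatrix M = fromBlocks M.toBlocks₂₁ M.toBlocks₂₂ 0 1 := by
  rw [velocityPositionMatrix, positionRow_mul, positionRow, fromRows_fromCols_eq_fromBlocks]

theorem det_velocityPositionMatrix (M : Matrix (m ⊕ m) (m ⊕ m) α) :
    (velocityPositionMatrix M).det = M.toBlocks₂₁.det := by
  rw [velocityPositionMatrix_eq_fromBlocks, det_fromBlocks_zero₂₁, det_one, mul_one]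

theorem positionRow_mul_fromBlocks (T X : Matrix m m α) :
    positionRow m α * fromBlocks T X 0 (1 : Matrix m m α) = positionRow m α := by
  rw [positionRow_mul, toBlocks_fromBlocks₂₁, toBlocks_fromBlocks₂₂, positionRow]

theorem mul_nonsing_inv_eq_self {k n : Type*} [Fintype n] [DecidableEq n]
    {w : Matrix k n α} {g : Matrix n n α} (hg : IsUnit g.det) (hw : w * g = w) :
    w * g⁻¹ = w := by
  calc w * g⁻¹ = w * g * g⁻¹ := by rw [hw]
    _ = w := by rw [Matrix.mul_assoc, mul_nonsing_inv g hg, Matrix.mul_one]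

theorem positionRow_mul_conj {g : Matrix (m ⊕ m) (m ⊕ m) α}
    (hgx : positionRow m α * g = positionRow m α) (N : Matrix (m ⊕ m) (m ⊕ m) α) :
    positionRow m α * (g * N * g⁻¹) = positionRow m α * N * g⁻¹ := by
  rw [← Matrix.mul_assoc, ← Matrix.mul_assoc, hgx]

theorem velocityPositionMatrix_conj {g : Matrix (m ⊕ m) (m ⊕ m) α} (hg : IsUnit g.det)
    (hgx : positionRow m α * g = positionRow m α) (M : Matrix (m ⊕ m) (m ⊕ m) α) :
    velocityPositionMatrix (g * M * g⁻¹) = velocityPositionMatrix M * g⁻¹ := by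
  rw [velocityPositionMatrix, velocityPositionMatrix, fromRows_mul, positionRow_mul_conj hgx,
    mul_nonsing_inv_eq_self hg hgx]

noncomputable def secondOrderCoeffs (M : Matrix (m ⊕ m) (m ⊕ m) α) : Matrix m (m ⊕ m) α :=
  positionRow m α * M * M * (velocityPositionMatrix M)⁻¹

theorem secondOrderCoeffs_conj {g : Matrix (m ⊕ m) (m ⊕ m) α} (hg : IsUnit g.det)
    (hgx : positionRow m α * g = positionRow m α) (M : Matrix (m ⊕ m) (m ⊕ m) α) :
    secondOrderCoeffs (g * M * g⁻¹) = secondOrderCoeffs M := by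
  rw [secondOrderCoeffs, secondOrderCoeffs, velocityPositionMatrix_conj hg hgx, Matrix.mul_inv_rev,
    nonsing_inv_nonsing_inv g hg, positionRow_mul_conj hgx]
  simp only [Matrix.mul_assoc, nonsing_inv_mul_cancel_left _ _ hg]

end Conjugation

theorem fromCols_B₁_B₂_mul_velocityPositionMatrix {n : ℕ}
    {M : Matrix (Fin n ⊕ Fin n) (Fin n ⊕ Fin n) ℝ} (h21 : IsUnit M.toBlocks₂₁.det) :
    fromCols (B₁ M) (B₂ M) * velocityPositionMatrix M = positionRow (Fin n) ℝ * M * M := by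
  obtain ⟨A, B, C, D, rfl⟩ : ∃ A B C D, M = fromBlocks A B C D :=
    ⟨_, _, _, _, (fromBlocks_toBlocks M).symm⟩
  simp only [toBlocks_fromBlocks₂₁] at h21
  have hCC : C⁻¹ * C = 1 := nonsing_inv_mul C h21
  simp only [B₁, B₂, positionRow_mul, velocityPositionMatrix_eq_fromBlocks, fromCols_mul_fromBlocks,
    toBlocks_fromBlocks₁₁, toBlocks_fromBlocks₁₂, toBlocks_fromBlocks₂₁, toBlocks_fromBlocks₂₂]
  congr 1
  · simp only [Matrix.add_mul, Matrix.mul_assoc, hCC, Matrix.mul_one, Matrix.mul_zero, add_zero]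
  · simp only [Matrix.add_mul, Matrix.mul_assoc, Matrix.mul_one]
    abel

theorem secondOrderCoeffs_eq_fromCols_B₁_B₂ {n : ℕ} {M : Matrix (Fin n ⊕ Fin n) (Fin n ⊕ Fin n) ℝ}
    (h21 : IsUnit M.toBlocks₂₁.det) :
    secondOrderCoeffs M = fromCols (B₁ M) (B₂ M) := by
  have hV : IsUnit (velocityPositionMatrix M).det := by rwa [det_velocityPositionMatrix]
  rw [secondOrderCoeffs, ← fromCols_B₁_B₂_mul_velocityPositionMatrix h21,
    mul_nonsing_inv_cancel_right _ _ hV]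

theorem stmt9 (n : ℕ) (M : Matrix (Fin n ⊕ Fin n) (Fin n ⊕ Fin n) ℝ)
    (h21 : IsUnit M.toBlocks₂₁.det)
    (T X : Matrix (Fin n) (Fin n) ℝ) (hT : IsUnit T.det) :
    IsUnit ((Matrix.fromBlocks T X 0 1 * M * (Matrix.fromBlocks T X 0 1)⁻¹).toBlocks₂₁).det ∧
    B₁ (Matrix.fromBlocks T X 0 1 * M * (Matrix.fromBlocks T X 0 1)⁻¹) = B₁ M ∧
    B₂ (Matrix.fromBlocks T X 0 1 * M * (Matrix.fromBlocks T X 0 1)⁻¹) = B₂ M := by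
  set g := fromBlocks T X 0 (1 : Matrix (Fin n) (Fin n) ℝ)
  have hg : IsUnit g.det := by rwa [det_fromBlocks_zero₂₁, det_one, mul_one]
  have hgx : positionRow (Fin n) ℝ * g = positionRow (Fin n) ℝ := positionRow_mul_fromBlocks T X
  have h21' : IsUnit (g * M * g⁻¹).toBlocks₂₁.det := by
    rw [← det_velocityPositionMatrix, velocityPositionMatrix_conj hg hgx, det_mul,
      det_velocityPositionMatrix]
    exact h21.mul (isUnit_nonsing_inv_det g hg)
  have hB : fromCols (B₁ (g * M * g⁻¹)) (B₂ (g * M * g⁻¹)) = fromCols (B₁ M) (B₂ M) := by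
    rw [← secondOrderCoeffs_eq_fromCols_B₁_B₂ h21', ← secondOrderCoeffs_eq_fromCols_B₁_B₂ h21,
      secondOrderCoeffs_conj hg hgx]
  exact ⟨h21', fromCols_inj hB⟩
end

section
/- Two 2n×2n real matrices M and W, each with invertible lower-left n×n block, satisfy B₁(M) = B₁(W) and B₂(M) = B₂(W) if and only if there exists g in the group P = {[[T, X],[0, I]] : T invertible} with W = g·M·g⁻¹. -/
open Matrix

/-! The element `[[M₂₁, M₂₂], [0, I]]` of `P` conjugates `M` to the block companion matrix
`[[B₁ M, B₂ M], [I, 0]]`, so `M` and `W` are `P`-conjugate iff their block companion matrices are.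
Comparing lower blocks, the only element of `P` intertwining two block companion matrices is the
identity, and then the two matrices coincide. -/

theorem SemiconjBy.iff_of_mul_eq_mul {α : Type*} [Monoid α] {a b g h x y u v : α}
    (ha : IsUnit a) (hb : IsUnit b) (hx : SemiconjBy a x u) (hy : SemiconjBy b y v)
    (hab : a * g = h * b) : SemiconjBy g y x ↔ SemiconjBy h v u := by
  have hl : a * (g * y) = h * v * b := by rw [← mul_assoc, hab, mul_assoc, hy.eq, mul_assoc]
  have hr : a * (x * g) = u * h * b := by rw [← mul_assoc, hx.eq, mul_assoc, hab, mul_assoc]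
  rw [SemiconjBy, SemiconjBy, ← ha.mul_right_inj, hl, hr, hb.mul_left_inj]

namespace Matrix

variable {n R : Type*} [Fintype n] [DecidableEq n]

theorem eq_mul_mul_nonsing_inv_iff_semiconjBy [CommRing R] {g x y : Matrix n n R}
    (hg : IsUnit g.det) : y = g * x * g⁻¹ ↔ SemiconjBy g x y := by
  constructor
  · rintro rfl
    exact (nonsing_inv_mul_cancel_right _ _ hg).symm
  · intro h
    rw [h.eq, mul_nonsing_inv_cancel_right _ _ hg]

section Semiring

variable [Semiring R]

def blockCompanion (P Q : Matrix n n R) : Matrix (n ⊕ n) (n ⊕ n) R :=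
  fromBlocks P Q 1 0

theorem fromBlocks_zero_one_mul_fromBlocks_zero_one (T X T' X' : Matrix n n R) :
    fromBlocks T X 0 1 * fromBlocks T' X' 0 1 =
      (fromBlocks (T * T') (T * X' + X) 0 1 : Matrix (n ⊕ n) (n ⊕ n) R) := by
  simp [fromBlocks_multiply]

theorem semiconjBy_blockCompanion_iff {T X P Q P' Q' : Matrix n n R} :
    SemiconjBy (fromBlocks T X 0 1) (blockCompanion P Q) (blockCompanion P' Q') ↔
      T = 1 ∧ X = 0 ∧ P = P' ∧ Q = Q' := by
  simp only [SemiconjBy, blockCompanion, fromBlocks_multiply, fromBlocks_inj, one_mul, mul_one,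
    zero_mul, mul_zero, add_zero, zero_add]
  constructor
  · rintro ⟨h₁₁, h₁₂, rfl, rfl⟩
    exact ⟨rfl, rfl, by simpa using h₁₁, by simpa using h₁₂⟩
  · rintro ⟨rfl, rfl, rfl, rfl⟩
    simp

end Semiring

section CommRing

variable [CommRing R]

theorem isUnit_det_fromBlocks_zero_one {T : Matrix n n R} (X : Matrix n n R)
    (hT : IsUnit T.det) : IsUnit (fromBlocks T X 0 1).det := by
  rwa [det_fromBlocks_zero₂₁, det_one, mul_one]

theorem exists_fromBlocks_zero_one_mul_eq {T' T : Matrix n n R} (X' X : Matrix n n R)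
    (hT' : IsUnit T'.det) (hT : IsUnit T.det) :
    ∃ S Y : Matrix n n R, IsUnit S.det ∧ fromBlocks T' X' 0 1 * fromBlocks S Y 0 1 =
      (fromBlocks T X 0 1 : Matrix (n ⊕ n) (n ⊕ n) R) := by
  refine ⟨T'⁻¹ * T, T'⁻¹ * (X - X'), ?_, ?_⟩
  · rw [det_mul, det_nonsing_inv]
    exact (isUnit_ringInverse.2 hT').mul hT
  · rw [fromBlocks_zero_one_mul_fromBlocks_zero_one, mul_nonsing_inv_cancel_left _ _ hT',
      mul_nonsing_inv_cancel_left _ _ hT', sub_add_cancel]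

theorem exists_mul_fromBlocks_zero_one_eq {T' : Matrix n n R} (X' T X : Matrix n n R)
    (hT' : IsUnit T'.det) :
    ∃ S Y : Matrix n n R, fromBlocks S Y 0 1 * fromBlocks T' X' 0 1 =
      (fromBlocks T X 0 1 : Matrix (n ⊕ n) (n ⊕ n) R) := by
  refine ⟨T * T'⁻¹, X - T * T'⁻¹ * X', ?_⟩
  rw [fromBlocks_zero_one_mul_fromBlocks_zero_one, nonsing_inv_mul_cancel_right _ _ hT',
    add_sub_cancel]

end CommRing

end Matrix

noncomputable def standardFormConj {n : ℕ} (M : Matrix (Fin n ⊕ Fin n) (Fin n ⊕ Fin n) ℝ) :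
    Matrix (Fin n ⊕ Fin n) (Fin n ⊕ Fin n) ℝ :=
  fromBlocks M.toBlocks₂₁ M.toBlocks₂₂ 0 1

theorem isUnit_standardFormConj {n : ℕ} {M : Matrix (Fin n ⊕ Fin n) (Fin n ⊕ Fin n) ℝ}
    (h : IsUnit M.toBlocks₂₁.det) : IsUnit (standardFormConj M) :=
  (isUnit_iff_isUnit_det _).2 (isUnit_det_fromBlocks_zero_one _ h)

theorem semiconjBy_standardFormConj {n : ℕ} {M : Matrix (Fin n ⊕ Fin n) (Fin n ⊕ Fin n) ℝ}
    (h : IsUnit M.toBlocks₂₁.det) :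
    SemiconjBy (standardFormConj M) M (blockCompanion (B₁ M) (B₂ M)) := by
  have hinv : M.toBlocks₂₁⁻¹ * M.toBlocks₂₁ = 1 := nonsing_inv_mul _ h
  conv_lhs => rw [← fromBlocks_toBlocks M]
  rw [SemiconjBy, standardFormConj, blockCompanion, fromBlocks_multiply, fromBlocks_multiply]
  refine fromBlocks_inj.2 ⟨?_, ?_, ?_, ?_⟩
  · rw [B₁, add_mul, mul_assoc _ _ M.toBlocks₂₁, hinv]
    simp
  · simp only [B₁, B₂, mul_one]
    noncomm_ring
  · simp
  · simp

theorem stmt10 (n : ℕ) (M W : Matrix (Fin n ⊕ Fin n) (Fin n ⊕ Fin n) ℝ)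
    (hM21 : IsUnit M.toBlocks₂₁.det) (hW21 : IsUnit W.toBlocks₂₁.det) :
    (B₁ M = B₁ W ∧ B₂ M = B₂ W) ↔
      ∃ T X : Matrix (Fin n) (Fin n) ℝ, IsUnit T.det ∧
        W = Matrix.fromBlocks T X 0 1 * M * (Matrix.fromBlocks T X 0 1)⁻¹ := by
  have intertwine g k := SemiconjBy.iff_of_mul_eq_mul (g := g) (h := k)
    (isUnit_standardFormConj hW21) (isUnit_standardFormConj hM21)
    (semiconjBy_standardFormConj hW21) (semiconjBy_standardFormConj hM21)
  constructor
  · rintro ⟨h₁, h₂⟩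
    obtain ⟨T, X, hT, hTX⟩ :=
      exists_fromBlocks_zero_one_mul_eq W.toBlocks₂₂ M.toBlocks₂₂ hW21 hM21
    refine ⟨T, X, hT, ?_⟩
    rw [eq_mul_mul_nonsing_inv_iff_semiconjBy (isUnit_det_fromBlocks_zero_one X hT),
      intertwine _ _ (hTX.trans (one_mul _).symm), h₁, h₂]
    exact SemiconjBy.one_left _
  · rintro ⟨T, X, hT, hW⟩
    rw [eq_mul_mul_nonsing_inv_iff_semiconjBy (isUnit_det_fromBlocks_zero_one X hT)] at hW
    obtain ⟨S, Y, hSY⟩ := exists_mul_fromBlocks_zero_one_eq M.toBlocks₂₂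
      (W.toBlocks₂₁ * T) (W.toBlocks₂₁ * X + W.toBlocks₂₂) hM21
    have hfactor : standardFormConj W * fromBlocks T X 0 1 =
        fromBlocks S Y 0 1 * standardFormConj M := by
      rw [standardFormConj, standardFormConj, hSY, fromBlocks_zero_one_mul_fromBlocks_zero_one]
    rw [intertwine _ _ hfactor, semiconjBy_blockCompanion_iff] at hW
    exact hW.2.2
end
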